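/- With the conventions above (T^{(1)}_0 = 1, T^{(1)}_{ℓ<0} = 0, T^{(a)}_1 = 0 for a ≥ n+2 or a < 0, T^{(0)}_1 = 1), define T^{(a)}_ℓ(λ) = T_μ(λ) for μ the a×ℓ rectangular Young diagram via the quantum Jacobi-Trudi formula. Then the T-system holds: T^{(a)}_ℓ(λ q^{1/2}) T^{(a)}_ℓ(λ q^{−1/2}) = T^{(a)}_{ℓ+1}(λ) T^{(a)}_{ℓ−1}(λ) + T^{(a+1)}_ℓ(λ) T^{(a−1)}_ℓ(λ) for 1 ≤ a ≤ n, with T^{(a)}_ℓ = 1 whenever a = 0 or ℓ = 0. -/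

import Mathlib

/-!
The `T`-system is the Desnanot–Jacobi identity for the `(a + 1) × (a + 1)` Jacobi–Trudi matrix
of width `l`. Deleting its first (last) row and column leaves the `a × l` matrix at spectral
parameter `λ s` (`λ s⁻¹`), where `s = q^{1/2}`; deleting the first row and last column, or the
reverse, changes the width to `l ± 1`; deleting both gives the `(a - 1) × l` matrix.

Desnanot–Jacobi is the case `|ι| = 2` of Jacobi's theorem on complementary minors,
`det (adj A)₁₁ = det A ^ (|ι| - 1) * det A₂₂`: multiplying `A` by `[[B₁₁, 0], [B₂₁, 1]]`, where
`B = adj A`, gives `[[det A • 1, A₁₂], [0, A₂₂]]`, and `det A` can be cancelled for the generic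
matrix over `MvPolynomial _ ℤ`.
-/

/-- The quantum Jacobi-Trudi determinant for the rectangular Young diagram of height `a`
and width `l` (paper eq. (qJTsym) with `η = ∅`, `μ` the `a × l` rectangle). -/
noncomputable def Trect (TL : ℤ → ℂ → ℂ) (s : ℂ) (a l : ℕ) (lam : ℂ) : ℂ :=
  Matrix.det (Matrix.of fun j k : Fin a =>
    TL ((l : ℤ) - (j : ℤ) + (k : ℤ)) (lam * s ^ ((j : ℤ) + (k : ℤ) + 1 - (a : ℤ))))

namespace Matrix

variable {R : Type*} [CommRing R] {ι κ : Type*} [Fintype ι] [Fintype κ] [DecidableEq ι]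
  [DecidableEq κ]

theorem det_mul_det_toBlocks₁₁_adjugate (A : Matrix (ι ⊕ κ) (ι ⊕ κ) R) :
    A.det * (adjugate A).toBlocks₁₁.det = A.det ^ Fintype.card ι * A.toBlocks₂₂.det := by
  set B := adjugate A
  set d := A.det
  have hAB : A * B = d • 1 := mul_adjugate A
  rw [← fromBlocks_toBlocks A, ← fromBlocks_toBlocks B, fromBlocks_multiply, ← fromBlocks_one,
    fromBlocks_smul, fromBlocks_inj, smul_zero] at hAB
  obtain ⟨h₁₁, -, h₂₁, -⟩ := hAB
  have hAC : A * fromBlocks B.toBlocks₁₁ 0 B.toBlocks₂₁ 1 =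
      fromBlocks (d • 1) A.toBlocks₁₂ 0 A.toBlocks₂₂ := by
    conv_lhs => rw [← fromBlocks_toBlocks A]
    rw [fromBlocks_multiply, h₁₁, h₂₁]
    simp
  have := congrArg det hAC
  rwa [det_mul, det_fromBlocks_zero₁₂, det_fromBlocks_zero₂₁, det_one, mul_one, det_smul,
    det_one, mul_one] at this

theorem det_toBlocks₁₁_adjugate [Nonempty ι] (A : Matrix (ι ⊕ κ) (ι ⊕ κ) R) :
    (adjugate A).toBlocks₁₁.det = A.det ^ (Fintype.card ι - 1) * A.toBlocks₂₂.det := by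
  let X := mvPolynomialX (ι ⊕ κ) (ι ⊕ κ) ℤ
  suffices (adjugate X).toBlocks₁₁.det = X.det ^ (Fintype.card ι - 1) * X.toBlocks₂₂.det by
    let f := MvPolynomial.aeval (R := ℤ) fun p : (ι ⊕ κ) × (ι ⊕ κ) => A p.1 p.2
    have hX : f.mapMatrix X = A := mvPolynomialX_mapMatrix_aeval ℤ A
    have := congrArg f this
    rwa [map_mul, map_pow, AlgHom.map_det, AlgHom.map_det, AlgHom.map_det,
      show f.mapMatrix X.adjugate.toBlocks₁₁ = (f.mapMatrix X.adjugate).toBlocks₁₁ from rfl,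
      show f.mapMatrix X.toBlocks₂₂ = (f.mapMatrix X).toBlocks₂₂ from rfl,
      AlgHom.map_adjugate, hX] at this
  apply mul_left_cancel₀ (det_mvPolynomialX_ne_zero (ι ⊕ κ) ℤ)
  rw [det_mul_det_toBlocks₁₁_adjugate, ← mul_assoc, ← pow_succ',
    Nat.sub_add_cancel Fintype.card_pos]

theorem desnanot_jacobi {m : ℕ} (A : Matrix (Fin (m + 2)) (Fin (m + 2)) R) :
    (A.submatrix Fin.succ Fin.succ).det * (A.submatrix Fin.castSucc Fin.castSucc).det -
        (A.submatrix Fin.castSucc Fin.succ).det * (A.submatrix Fin.succ Fin.castSucc).det =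
      A.det * (A.submatrix (Fin.castSucc ∘ Fin.succ) (Fin.castSucc ∘ Fin.succ)).det := by
  have hinj : Function.Injective (Sum.elim ![0, Fin.last (m + 1)] (Fin.castSucc ∘ Fin.succ)) := by
    refine Function.Injective.sumElim ?_ ((Fin.castSucc_injective _).comp (Fin.succ_injective _)) ?_
    · intro i j h
      fin_cases i <;> fin_cases j <;> simp_all [Fin.ext_iff]
    · intro i j
      fin_cases i <;> simp [Fin.ext_iff]; omega
  let e : Fin 2 ⊕ Fin m ≃ Fin (m + 2) := Equiv.ofBijective _
    ((Fintype.bijective_iff_injective_and_card _).2 ⟨hinj, by simp [add_comm]⟩)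
  have h := det_toBlocks₁₁_adjugate (A.submatrix e e)
  have hmid : (A.submatrix e e).toBlocks₂₂ =
      A.submatrix (Fin.castSucc ∘ Fin.succ) (Fin.castSucc ∘ Fin.succ) := rfl
  rw [hmid, adjugate_submatrix_equiv_self, det_submatrix_equiv_self, det_fin_two] at h
  simp only [toBlocks₁₁, e, Equiv.coe_ofBijective, submatrix_apply, Sum.elim_inl, of_apply,
    cons_val_zero, cons_val_one, cons_val_fin_one, adjugate_fin_succ_eq_det_submatrix,
    Fin.succAbove_zero, Fin.succAbove_last, Fin.val_zero, Fin.val_last, add_zero, zero_add,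
    Even.add_self, Even.neg_pow, pow_zero, one_pow, one_mul, Fintype.card_fin,
    Nat.add_one_sub_one, pow_one] at h
  have hsign : ((-1 : R) ^ (m + 1)) ^ 2 = 1 := by
    rw [← pow_mul, mul_comm, pow_mul, neg_one_sq, one_pow]
  linear_combination h + (A.submatrix Fin.castSucc Fin.succ).det *
    (A.submatrix Fin.succ Fin.castSucc).det * hsign

end Matrix

def jacobiTrudiMatrix {R K : Type*} [GroupWithZero K] (TL : ℤ → K → R) (s : K) (a l : ℕ)
    (lam : K) : Matrix (Fin a) (Fin a) R :=
  Matrix.of fun j k => TL ((l : ℤ) - j + k) (lam * s ^ ((j : ℤ) + k + 1 - a))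

theorem Trect_eq_det_jacobiTrudiMatrix (TL : ℤ → ℂ → ℂ) (s : ℂ) (a l : ℕ) (lam : ℂ) :
    Trect TL s a l lam = (jacobiTrudiMatrix TL s a l lam).det := rfl

theorem jacobiTrudiMatrix_submatrix {R K : Type*} [GroupWithZero K] (TL : ℤ → K → R) {s : K}
    (hs : s ≠ 0) {a b l l' : ℕ} {f g : Fin b → Fin a} {r c : ℤ}
    (hf : ∀ j, (f j : ℤ) = j + r) (hg : ∀ k, (g k : ℤ) = k + c) (hl : (l' : ℤ) = l - r + c)
    {lam lam' : K} (hlam : lam * s ^ (r + c + b - a) = lam') :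
    (jacobiTrudiMatrix TL s a l lam).submatrix f g = jacobiTrudiMatrix TL s b l' lam' := by
  ext j k
  simp only [jacobiTrudiMatrix, Matrix.submatrix_apply, Matrix.of_apply, hf, hg, hl, ← hlam,
    mul_assoc, ← zpow_add₀ hs]
  congr 1
  · ring
  · congr 2
    ring

theorem stmt4_general (n : ℕ) (s : ℂ) (hs : s ≠ 0)
    (TL : ℤ → ℂ → ℂ) :
    ∀ a l : ℕ, 1 ≤ a → a ≤ n → 1 ≤ l → ∀ lam : ℂ,
      Trect TL s a l (lam * s) * Trect TL s a l (lam * s⁻¹) =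
        Trect TL s a (l + 1) lam * Trect TL s a (l - 1) lam +
          Trect TL s (a + 1) l lam * Trect TL s (a - 1) l lam := by
  rintro a l ha - hl lam
  obtain ⟨m, rfl⟩ : ∃ m, a = m + 1 := ⟨a - 1, by omega⟩
  obtain ⟨p, rfl⟩ : ∃ p, l = p + 1 := ⟨l - 1, by omega⟩
  set J := jacobiTrudiMatrix TL s (m + 1 + 1) (p + 1) lam
  have hsucc : J.submatrix Fin.succ Fin.succ = jacobiTrudiMatrix TL s (m + 1) (p + 1) (lam * s) :=
    jacobiTrudiMatrix_submatrix TL hs (r := 1) (c := 1) (by simp) (by simp) (by simp)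
      (by push_cast; ring_nf; simp)
  have hcast : J.submatrix Fin.castSucc Fin.castSucc =
      jacobiTrudiMatrix TL s (m + 1) (p + 1) (lam * s⁻¹) :=
    jacobiTrudiMatrix_submatrix TL hs (r := 0) (c := 0) (by simp) (by simp) (by simp)
      (by push_cast; ring_nf; simp)
  have hwide : J.submatrix Fin.castSucc Fin.succ =
      jacobiTrudiMatrix TL s (m + 1) (p + 1 + 1) lam :=
    jacobiTrudiMatrix_submatrix TL hs (r := 0) (c := 1) (by simp) (by simp) (by push_cast; ring)
      (by push_cast; ring_nf; simp)
  have hnarrow : J.submatrix Fin.succ Fin.castSucc =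
      jacobiTrudiMatrix TL s (m + 1) (p + 1 - 1) lam :=
    jacobiTrudiMatrix_submatrix TL hs (r := 1) (c := 0) (by simp) (by simp) (by simp)
      (by push_cast; ring_nf; simp)
  have hmid : J.submatrix (Fin.castSucc ∘ Fin.succ) (Fin.castSucc ∘ Fin.succ) =
      jacobiTrudiMatrix TL s (m + 1 - 1) (p + 1) lam :=
    jacobiTrudiMatrix_submatrix TL hs (r := 1) (c := 1) (by simp) (by simp) (by push_cast; ring)
      (by push_cast; ring_nf; simp)
  simp only [Trect_eq_det_jacobiTrudiMatrix, ← hsucc, ← hcast, ← hwide, ← hnarrow, ← hmid]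
  linear_combination Matrix.desnanot_jacobi J

/-- the `T`-system (paper eq. (tsys)) for the rectangular quantum
Jacobi-Trudi determinants, `1 ≤ a ≤ n`; it follows from the Plücker relation. -/
theorem stmt4 (n : ℕ) (s : ℂ) (hs : s ≠ 0)
    (TL T1 : ℤ → ℂ → ℂ)
    (hTL0 : ∀ lam, TL 0 lam = 1)
    (hTLneg : ∀ l : ℤ, l < 0 → ∀ lam, TL l lam = 0)
    (hT10 : ∀ lam, T1 0 lam = 1)
    (hT1neg : ∀ a : ℤ, a < 0 → ∀ lam, T1 a lam = 0)
    (hT1high : ∀ a : ℤ, (n : ℤ) + 2 ≤ a → ∀ lam, T1 a lam = 0)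
    (hT1det : ∀ a : ℕ, 1 ≤ a → ∀ lam, T1 (a : ℤ) lam =
      Matrix.det (Matrix.of fun i j : Fin a =>
        TL (1 - (i : ℤ) + (j : ℤ)) (lam * s ^ ((i : ℤ) + (j : ℤ) + 1 - (a : ℤ))))) :
    ∀ a l : ℕ, 1 ≤ a → a ≤ n → 1 ≤ l → ∀ lam : ℂ,
      Trect TL s a l (lam * s) * Trect TL s a l (lam * s⁻¹) =
        Trect TL s a (l + 1) lam * Trect TL s a (l - 1) lam +
          Trect TL s (a + 1) l lam * Trect TL s (a - 1) l lam :=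
  stmt4_general n s hs TL
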